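/- arXiv:1010.0136 — 2 statements merged into one kernel-verified Lean document; each statement's English description precedes it below -/
import Mathlib

section
/- Let u, v, w be unit vectors in a complex Hilbert space H such that the set {u, v, w} is linearly independent. Then the triangle inequality for δ is strict: δ(u,w) < δ(u,v) + δ(v,w), where δ(a,b) = √(1 − |⟨a,b⟩|²). (Consequently, for a reproducing kernel Hilbert space whose kernel functions at three distinct points are linearly independent, δ is never an inner distance between those points.) -/
/-!
Removing from `u` and `w` their components along `v` gives `p = u - ⟪v, u⟫ v` and
`q = w - ⟪v, w⟫ v` with `‖p‖ = δ(u,v)`, `‖q‖ = δ(v,w)` and `⟪p, q⟫ = ⟪u, w⟫ - ⟪u, v⟫⟪v, w⟫`.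
Linear independence of `u, v, w` makes `p, q` independent, so Cauchy–Schwarz is strict:
`|c - ab| < δ(u,v) δ(v,w)` for `a = |⟪u, v⟫|`, `b = |⟪v, w⟫|`, `c = |⟪u, w⟫|`. Writing
`a = cos α`, `b = cos β`, this says `c > cos (α + β)`, which gives
`√(1 - c²) < sin (α + β) ≤ sin α + sin β` when `α + β ≤ π/2`; when `α + β > π/2`, already
`sin² α + sin² β > 1`.
-/

open scoped InnerProductSpace

theorem sqrt_one_sub_sq_lt_add {a b c : ℝ} (ha : 0 ≤ a) (hb : 0 ≤ b)
    (h : |c - a * b| < √(1 - a ^ 2) * √(1 - b ^ 2)) :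
    √(1 - c ^ 2) < √(1 - a ^ 2) + √(1 - b ^ 2) := by
  set A := √(1 - a ^ 2)
  set B := √(1 - b ^ 2)
  have hAB : 0 < A * B := (abs_nonneg _).trans_lt h
  have hA : 0 < A := pos_of_mul_pos_left hAB (Real.sqrt_nonneg _)
  have hB : 0 < B := pos_of_mul_pos_right hAB (Real.sqrt_nonneg _)
  have hA2 : A ^ 2 = 1 - a ^ 2 := Real.sq_sqrt (Real.sqrt_pos.mp hA).le
  have hB2 : B ^ 2 = 1 - b ^ 2 := Real.sq_sqrt (Real.sqrt_pos.mp hB).le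
  rw [Real.sqrt_lt' (by positivity)]
  obtain ⟨hlow, -⟩ := abs_lt.mp h
  rcases le_or_gt (A * B) (a * b) with hle | hlt
  · -- `(ab - AB)² = a² + b² - 1 - 2AB + 2AB (AB + 1 - ab)` and `ab ≤ 1`
    have hab : a * b ≤ 1 := by nlinarith
    nlinarith [mul_nonneg hAB.le (sub_nonneg.mpr hab)]
  · -- `a²b² < A²B² = (1 - a²)(1 - b²)` forces `a² + b² < 1`
    have : a ^ 2 + b ^ 2 < 1 := by nlinarith [mul_nonneg ha hb]
    nlinarith [sq_nonneg c]

section InnerProduct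

variable {𝕜 E : Type*} [RCLike 𝕜] [NormedAddCommGroup E] [InnerProductSpace 𝕜 E]

theorem inner_sub_inner_smul_sub_inner_smul {v : E} (hv : ‖v‖ = 1) (u w : E) :
    ⟪u - ⟪v, u⟫_𝕜 • v, w - ⟪v, w⟫_𝕜 • v⟫_𝕜 = ⟪u, w⟫_𝕜 - ⟪u, v⟫_𝕜 * ⟪v, w⟫_𝕜 := by
  have hvv : ⟪v, v⟫_𝕜 = 1 := by simp [inner_self_eq_norm_sq_to_K, hv]
  simp only [inner_sub_left, inner_sub_right, inner_smul_left, inner_smul_right, inner_conj_symm,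
    hvv]
  ring

theorem norm_sub_inner_smul_sq {v : E} (hv : ‖v‖ = 1) (u : E) :
    ‖u - ⟪v, u⟫_𝕜 • v‖ ^ 2 = ‖u‖ ^ 2 - ‖⟪u, v⟫_𝕜‖ ^ 2 := by
  rw [@norm_sq_eq_re_inner 𝕜, inner_sub_inner_smul_sub_inner_smul hv, map_sub,
    inner_mul_symm_re_eq_norm, norm_mul, norm_inner_symm v u, ← sq, ← norm_sq_eq_re_inner]

theorem norm_inner_lt_norm_mul_norm_of_linearIndependent {x y : E}
    (h : LinearIndependent 𝕜 ![x, y]) : ‖⟪x, y⟫_𝕜‖ < ‖x‖ * ‖y‖ := by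
  refine (norm_inner_le_norm x y).lt_of_ne fun heq => ?_
  rcases ((norm_inner_eq_norm_tfae 𝕜 x y).out 0 2).mp heq with hx | ⟨r, rfl⟩
  · exact h.ne_zero 0 hx
  · have := LinearIndependent.pair_iff.mp h r (-1) (by simp)
    exact absurd this.2 (by norm_num)

end InnerProduct

theorem LinearIndependent.pair_sub_smul {R M : Type*} [CommRing R] [AddCommGroup M] [Module R M]
    {u v w : M} (h : LinearIndependent R ![u, v, w]) (a b : R) :
    LinearIndependent R ![u - a • v, w - b • v] := by
  refine LinearIndependent.pair_iff.mpr fun s t hst => ?_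
  have hcomb := Fintype.linearIndependent_iff.mp h ![s, -(s * a) - t * b, t] (by
    simp only [Fin.sum_univ_three, Matrix.cons_val]
    linear_combination (norm := module) hst)
  exact ⟨hcomb 0, hcomb 2⟩

/-- For unit vectors `u, v, w` in a complex Hilbert space
with `{u, v, w}` linearly independent, the triangle inequality for
`δ(a,b) = √(1 − |⟨a,b⟩|²)` is strict: `δ(u,w) < δ(u,v) + δ(v,w)`.
(Consequently, for a RKHS whose kernel functions at three distinct points are
linearly independent, `δ` is never an inner distance between those points.) -/
theorem delta_strict_triangle {H : Type*} [NormedAddCommGroup H] [InnerProductSpace ℂ H]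
    (u v w : H) (hu : ‖u‖ = 1) (hv : ‖v‖ = 1) (hw : ‖w‖ = 1)
    (hind : LinearIndependent ℂ ![u, v, w]) :
    Real.sqrt (1 - ‖(inner ℂ u w : ℂ)‖ ^ 2)
      < Real.sqrt (1 - ‖(inner ℂ u v : ℂ)‖ ^ 2) + Real.sqrt (1 - ‖(inner ℂ v w : ℂ)‖ ^ 2) := by
  set p := u - ⟪v, u⟫_ℂ • v
  set q := w - ⟪v, w⟫_ℂ • v
  have hp : ‖p‖ = √(1 - ‖⟪u, v⟫_ℂ‖ ^ 2) := by
    have h := norm_sub_inner_smul_sq (𝕜 := ℂ) hv u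
    rw [hu, one_pow] at h
    rw [← h, Real.sqrt_sq (norm_nonneg _)]
  have hq : ‖q‖ = √(1 - ‖⟪v, w⟫_ℂ‖ ^ 2) := by
    have h := norm_sub_inner_smul_sq (𝕜 := ℂ) hv w
    rw [hw, one_pow, norm_inner_symm] at h
    rw [← h, Real.sqrt_sq (norm_nonneg _)]
  refine sqrt_one_sub_sq_lt_add (norm_nonneg _) (norm_nonneg _) ?_
  calc |‖⟪u, w⟫_ℂ‖ - ‖⟪u, v⟫_ℂ‖ * ‖⟪v, w⟫_ℂ‖|
      = |‖⟪u, w⟫_ℂ‖ - ‖⟪u, v⟫_ℂ * ⟪v, w⟫_ℂ‖| := by rw [norm_mul]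
    _ ≤ ‖⟪u, w⟫_ℂ - ⟪u, v⟫_ℂ * ⟪v, w⟫_ℂ‖ := abs_norm_sub_norm_le _ _
    _ = ‖⟪p, q⟫_ℂ‖ := by rw [inner_sub_inner_smul_sub_inner_smul hv]
    _ < ‖p‖ * ‖q‖ := norm_inner_lt_norm_mul_norm_of_linearIndependent (hind.pair_sub_smul _ _)
    _ = √(1 - ‖⟪u, v⟫_ℂ‖ ^ 2) * √(1 - ‖⟪v, w⟫_ℂ‖ ^ 2) := by rw [hp, hq]
end

section
/- Let A be a bounded linear operator on a complex Hilbert space H and let u, v be unit vectors in H. Then |⟨Au,u⟩ − ⟨Av,v⟩| ≤ 2‖A‖·δ(u,v), where δ(u,v) = √(1 − |⟨u,v⟩|²) and ‖A‖ is the operator norm. Moreover this estimate is sharp: for the choice A = P_u − P_v (the difference of the orthogonal projections onto ℂu and ℂv) equality holds, i.e. |⟨Au,u⟩ − ⟨Av,v⟩| = 2‖A‖·δ(u,v). -/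
/-- The orthogonal projection of `H` onto the line `ℂ • u` spanned by a unit
vector `u`, as a continuous linear map `H →L[ℂ] H`: `P u f = ⟪u, f⟫ • u`. -/
noncomputable def rankOneProj {H : Type*} [NormedAddCommGroup H] [InnerProductSpace ℂ H]
    (u : H) : H →L[ℂ] H :=
  (innerSL ℂ u).smulRight u

/-!
Polarization gives `2 (⟪Au, u⟫ - ⟪Av, v⟫) = ⟪A(u - v), u + v⟫ + ⟪A(u + v), u - v⟫`, so the
difference is at most `‖A‖ ‖u - v‖ ‖u + v‖`. Multiplying `v` by a unimodular scalar changes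
neither `⟪Av, v⟫` nor `|⟪u, v⟫|` and makes `⟪u, v⟫ = |⟪u, v⟫|`, and then
`‖u - v‖² ‖u + v‖² = 4 (1 - |⟪u, v⟫|²) = 4 δ²`.

For sharpness, `D = P_u - P_v` has `⟪Du, u⟫ - ⟪Dv, v⟫ = 2 δ²`, so it suffices that `‖D‖ ≤ δ`.
With `y = x - ⟪v, x⟫ v`, the vector `Dx = ⟪u, y⟫ u - ⟪v, x⟫ (v - ⟪u, v⟫ u)` is an orthogonal
sum; both `u - ⟪v, u⟫ v` and `v - ⟪u, v⟫ u` have norm `δ`, and `y ⊥ v` gives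
`|⟪u, y⟫| = |⟪u - ⟪v, u⟫ v, y⟫| ≤ δ ‖y‖`, so `‖Dx‖² ≤ δ² (‖y‖² + |⟪v, x⟫|²) = δ² ‖x‖²`.
-/

open RCLike ComplexConjugate
open scoped InnerProductSpace

section InnerProductSpace

variable {𝕜 E : Type*} [RCLike 𝕜] [NormedAddCommGroup E] [InnerProductSpace 𝕜 E]

theorem two_mul_inner_map_self_sub_inner_map_self {F : Type*} [FunLike F E E]
    [LinearMapClass F 𝕜 E E] (A : F) (u v : E) :
    2 * (⟪A u, u⟫_𝕜 - ⟪A v, v⟫_𝕜) = ⟪A (u - v), u + v⟫_𝕜 + ⟪A (u + v), u - v⟫_𝕜 := by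
  simp only [map_sub, map_add, inner_sub_left, inner_add_left, inner_sub_right, inner_add_right]
  ring

theorem norm_inner_map_self_sub_inner_map_self_le (A : E →L[𝕜] E) (u v : E) :
    ‖⟪A u, u⟫_𝕜 - ⟪A v, v⟫_𝕜‖ ≤ ‖A‖ * (‖u - v‖ * ‖u + v‖) := by
  have hbound (x y : E) : ‖⟪A x, y⟫_𝕜‖ ≤ ‖A‖ * (‖x‖ * ‖y‖) :=
    calc ‖⟪A x, y⟫_𝕜‖ ≤ ‖A x‖ * ‖y‖ := norm_inner_le_norm _ _
      _ ≤ ‖A‖ * ‖x‖ * ‖y‖ := by gcongr; exact A.le_opNorm x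
      _ = ‖A‖ * (‖x‖ * ‖y‖) := mul_assoc _ _ _
  have hpolar := congrArg norm (two_mul_inner_map_self_sub_inner_map_self A u v)
  rw [norm_mul, RCLike.norm_two] at hpolar
  have := norm_add_le ⟪A (u - v), u + v⟫_𝕜 ⟪A (u + v), u - v⟫_𝕜
  nlinarith [hbound (u - v) (u + v), hbound (u + v) (u - v)]

theorem norm_sub_mul_norm_add_of_norm_eq_one {u v : E} (hu : ‖u‖ = 1) (hv : ‖v‖ = 1) :
    ‖u - v‖ * ‖u + v‖ = 2 * √(1 - re ⟪u, v⟫_𝕜 ^ 2) := by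
  have hsq : (‖u - v‖ * ‖u + v‖) ^ 2 = 2 ^ 2 * (1 - re ⟪u, v⟫_𝕜 ^ 2) := by
    rw [mul_pow, norm_sub_sq (𝕜 := 𝕜), norm_add_sq (𝕜 := 𝕜), hu, hv]
    ring
  rw [← Real.sqrt_sq (by positivity : 0 ≤ ‖u - v‖ * ‖u + v‖), hsq, Real.sqrt_mul' _ ?_,
    Real.sqrt_sq zero_le_two]
  nlinarith [sq_nonneg (‖u - v‖ * ‖u + v‖)]

theorem exists_norm_eq_one_mul_eq_norm (z : 𝕜) : ∃ μ : 𝕜, ‖μ‖ = 1 ∧ μ * z = ‖z‖ := by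
  rcases eq_or_ne z 0 with rfl | hz
  · exact ⟨1, norm_one, by simp⟩
  · refine ⟨conj z / ‖z‖, ?_, ?_⟩
    · rw [norm_div, RCLike.norm_conj, RCLike.norm_ofReal, abs_norm,
        div_self (norm_ne_zero_iff.2 hz)]
    · rw [div_mul_eq_mul_div, RCLike.conj_mul, sq, mul_div_assoc,
        div_self (by simpa using hz), mul_one]

theorem inner_map_smul_smul_of_norm_eq_one {F : Type*} [FunLike F E E]
    [LinearMapClass F 𝕜 E E] (A : F) {μ : 𝕜} (hμ : ‖μ‖ = 1) (v : E) :
    ⟪A (μ • v), μ • v⟫_𝕜 = ⟪A v, v⟫_𝕜 := by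
  rw [map_smul, inner_smul_left, inner_smul_right, ← mul_assoc, RCLike.conj_mul, hμ]
  simp

theorem norm_inner_map_self_sub_inner_map_self_le_two_mul_sqrt (A : E →L[𝕜] E) {u v : E}
    (hu : ‖u‖ = 1) (hv : ‖v‖ = 1) :
    ‖⟪A u, u⟫_𝕜 - ⟪A v, v⟫_𝕜‖ ≤ 2 * ‖A‖ * √(1 - ‖⟪u, v⟫_𝕜‖ ^ 2) := by
  obtain ⟨μ, hμ, hμv⟩ := exists_norm_eq_one_mul_eq_norm ⟪u, v⟫_𝕜
  have hμv_norm : ‖μ • v‖ = 1 := by rw [norm_smul, hμ, hv, one_mul]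
  have hre : re ⟪u, μ • v⟫_𝕜 = ‖⟪u, v⟫_𝕜‖ := by rw [inner_smul_right, hμv, RCLike.ofReal_re]
  calc ‖⟪A u, u⟫_𝕜 - ⟪A v, v⟫_𝕜‖ = ‖⟪A u, u⟫_𝕜 - ⟪A (μ • v), μ • v⟫_𝕜‖ := by
        rw [inner_map_smul_smul_of_norm_eq_one A hμ v]
    _ ≤ ‖A‖ * (‖u - μ • v‖ * ‖u + μ • v‖) := norm_inner_map_self_sub_inner_map_self_le A u _
    _ = 2 * ‖A‖ * √(1 - ‖⟪u, v⟫_𝕜‖ ^ 2) := by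
        rw [norm_sub_mul_norm_add_of_norm_eq_one (𝕜 := 𝕜) hu hμv_norm, hre]
        ring

theorem inner_sub_inner_smul_self_eq_zero {u : E} (hu : ‖u‖ = 1) (x : E) :
    ⟪u, x - ⟪u, x⟫_𝕜 • u⟫_𝕜 = 0 := by
  rw [inner_sub_right, inner_smul_right, inner_self_eq_one_of_norm_eq_one hu, mul_one, sub_self]

theorem norm_sq_eq_norm_inner_sq_add_norm_sub_inner_smul_sq {u : E} (hu : ‖u‖ = 1) (x : E) :
    ‖x‖ ^ 2 = ‖⟪u, x⟫_𝕜‖ ^ 2 + ‖x - ⟪u, x⟫_𝕜 • u‖ ^ 2 := by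
  have horth : ⟪⟪u, x⟫_𝕜 • u, x - ⟪u, x⟫_𝕜 • u⟫_𝕜 = 0 := by
    rw [inner_smul_left, inner_sub_inner_smul_self_eq_zero hu, mul_zero]
  have hpyth := norm_add_sq_eq_norm_sq_add_norm_sq_of_inner_eq_zero _ _ horth
  rw [add_sub_cancel, norm_smul, hu, mul_one] at hpyth
  simpa only [sq] using hpyth

theorem norm_sub_inner_smul_eq_sqrt {u v : E} (hu : ‖u‖ = 1) (hv : ‖v‖ = 1) :
    ‖v - ⟪u, v⟫_𝕜 • u‖ = √(1 - ‖⟪u, v⟫_𝕜‖ ^ 2) := by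
  have hpyth := norm_sq_eq_norm_inner_sq_add_norm_sub_inner_smul_sq (𝕜 := 𝕜) hu v
  rw [hv, one_pow] at hpyth
  rw [hpyth, add_sub_cancel_left, Real.sqrt_sq (norm_nonneg _)]

theorem norm_inner_le_sqrt_mul_of_inner_eq_zero {u v y : E} (hu : ‖u‖ = 1) (hv : ‖v‖ = 1)
    (hy : ⟪v, y⟫_𝕜 = 0) : ‖⟪u, y⟫_𝕜‖ ≤ √(1 - ‖⟪u, v⟫_𝕜‖ ^ 2) * ‖y‖ := by
  have hproj : ⟪u, y⟫_𝕜 = ⟪u - ⟪v, u⟫_𝕜 • v, y⟫_𝕜 := by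
    rw [inner_sub_left, inner_smul_left, hy, mul_zero, sub_zero]
  rw [hproj, ← norm_inner_symm v u, ← norm_sub_inner_smul_eq_sqrt hv hu]
  exact norm_inner_le_norm _ _

theorem norm_inner_smul_sub_inner_smul_le {u v : E} (hu : ‖u‖ = 1) (hv : ‖v‖ = 1) (x : E) :
    ‖⟪u, x⟫_𝕜 • u - ⟪v, x⟫_𝕜 • v‖ ≤ √(1 - ‖⟪u, v⟫_𝕜‖ ^ 2) * ‖x‖ := by
  set δ := √(1 - ‖⟪u, v⟫_𝕜‖ ^ 2)
  set b := ⟪v, x⟫_𝕜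
  set y := x - b • v
  set e := v - ⟪u, v⟫_𝕜 • u
  have hdecomp : ⟪u, x⟫_𝕜 • u - b • v = ⟪u, y⟫_𝕜 • u - b • e := by
    simp only [y, e, inner_sub_right, inner_smul_right]
    module
  have horth : ⟪⟪u, y⟫_𝕜 • u, b • e⟫_𝕜 = 0 := by
    rw [inner_smul_left, inner_smul_right, inner_sub_inner_smul_self_eq_zero hu, mul_zero,
      mul_zero]
  have hpyth : ‖⟪u, y⟫_𝕜 • u - b • e‖ ^ 2 = ‖⟪u, y⟫_𝕜‖ ^ 2 + ‖b‖ ^ 2 * δ ^ 2 := by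
    rw [norm_sub_sq (𝕜 := 𝕜), horth, norm_smul, norm_smul, hu, norm_sub_inner_smul_eq_sqrt hu hv]
    simp only [map_zero, mul_zero, sub_zero, mul_one, mul_pow]
    rfl
  have hy := norm_inner_le_sqrt_mul_of_inner_eq_zero hu hv
    (inner_sub_inner_smul_self_eq_zero (𝕜 := 𝕜) hv x)
  have hx := norm_sq_eq_norm_inner_sq_add_norm_sub_inner_smul_sq (𝕜 := 𝕜) hv x
  rw [← pow_le_pow_iff_left₀ (norm_nonneg _) (by positivity) two_ne_zero, hdecomp, hpyth,
    mul_pow, hx]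
  nlinarith [pow_le_pow_left₀ (norm_nonneg _) hy 2]

end InnerProductSpace

section RankOneProj

variable {H : Type*} [NormedAddCommGroup H] [InnerProductSpace ℂ H]

theorem rankOneProj_apply (u x : H) : rankOneProj u x = ⟪u, x⟫_ℂ • u := rfl

theorem norm_rankOneProj_sub_le {u v : H} (hu : ‖u‖ = 1) (hv : ‖v‖ = 1) :
    ‖rankOneProj u - rankOneProj v‖ ≤ √(1 - ‖⟪u, v⟫_ℂ‖ ^ 2) :=
  ContinuousLinearMap.opNorm_le_bound _ (Real.sqrt_nonneg _)
    (norm_inner_smul_sub_inner_smul_le hu hv)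

theorem inner_rankOneProj_sub_apply_self_sub {u v : H} (hu : ‖u‖ = 1) (hv : ‖v‖ = 1) :
    ⟪(rankOneProj u - rankOneProj v) u, u⟫_ℂ - ⟪(rankOneProj u - rankOneProj v) v, v⟫_ℂ
      = ((2 * (1 - ‖⟪u, v⟫_ℂ‖ ^ 2) : ℝ) : ℂ) := by
  simp only [sub_apply, rankOneProj_apply, inner_sub_left, inner_smul_left,
    inner_self_eq_one_of_norm_eq_one hu, inner_self_eq_one_of_norm_eq_one hv,
    ← inner_conj_symm u v, Complex.conj_mul', RCLike.norm_conj, norm_one]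
  push_cast
  ring

end RankOneProj

/-- Coburn's Lipschitz estimate for Berezin transforms.
For every bounded operator `A` on a complex Hilbert space and unit vectors
`u, v` one has `|⟨Au,u⟩ − ⟨Av,v⟩| ≤ 2‖A‖·δ(u,v)` with
`δ(u,v) = √(1 − |⟨u,v⟩|²)`; and the estimate is sharp: equality holds for
`A = P_u − P_v`. -/
theorem berezin_lipschitz {H : Type*} [NormedAddCommGroup H] [InnerProductSpace ℂ H]
    (u v : H) (hu : ‖u‖ = 1) (hv : ‖v‖ = 1) :
    (∀ A : H →L[ℂ] H,
      ‖(inner ℂ (A u) u : ℂ) - (inner ℂ (A v) v : ℂ)‖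
        ≤ 2 * ‖A‖ * Real.sqrt (1 - ‖(inner ℂ u v : ℂ)‖ ^ 2)) ∧
    ‖(inner ℂ ((rankOneProj u - rankOneProj v) u) u : ℂ)
        - (inner ℂ ((rankOneProj u - rankOneProj v) v) v : ℂ)‖
      = 2 * ‖rankOneProj u - rankOneProj v‖ * Real.sqrt (1 - ‖(inner ℂ u v : ℂ)‖ ^ 2) := by
  have hcs : ‖⟪u, v⟫_ℂ‖ ≤ 1 := by simpa [hu, hv] using norm_inner_le_norm (𝕜 := ℂ) u v
  set δ := √(1 - ‖⟪u, v⟫_ℂ‖ ^ 2)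
  have hδ : 1 - ‖⟪u, v⟫_ℂ‖ ^ 2 = δ ^ 2 := by
    rw [Real.sq_sqrt (by nlinarith [norm_nonneg ⟪u, v⟫_ℂ])]
  refine ⟨fun A => norm_inner_map_self_sub_inner_map_self_le_two_mul_sqrt A hu hv,
    le_antisymm (norm_inner_map_self_sub_inner_map_self_le_two_mul_sqrt _ hu hv) ?_⟩
  rw [inner_rankOneProj_sub_apply_self_sub hu hv, Complex.norm_of_nonneg (by rw [hδ]; positivity),
    hδ]
  calc 2 * ‖rankOneProj u - rankOneProj v‖ * δ ≤ 2 * δ * δ := by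
        gcongr
        exact norm_rankOneProj_sub_le hu hv
    _ = 2 * δ ^ 2 := by ring
end
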